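/- For every real x and all integers k, l ≥ 0 with (k,l) ≠ (0,0): (1/2)·(f_k·h_l − h_k·f_l) = (−1)^{k+l−1}·( ∑_{n=0}^{k−1} B_{l+n+1, k−1−n} − [l ≥ 1]·∑_{n=0}^{k} B_{l+n, k−n} ), where [l ≥ 1] is 1 if l ≥ 1 and 0 if l = 0, and an empty sum (when k = 0) is 0. (This is the coefficient formula V^{+−}_{kl} = i·(−1)^l·∑_{n=0}^{k} B_{l+n+1,k−n} in the expansion of V^{+−}(z,w).) -/
import Mathlib


/-- `α₀ = 1` and, for `n ≥ 1`, `αₙ = ((-1)ⁿ/(8ⁿ·n!))·∏_{ℓ=1}^{n}(2ℓ-1)²`. -/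
noncomputable def alph (n : ℕ) : ℝ :=
  ((-1) ^ n / (8 ^ n * Nat.factorial n)) * ∏ ℓ ∈ Finset.range n, ((2 * (ℓ : ℝ) + 1)) ^ 2

/-- `f₀ = 1` and `fₙ = (−1)ⁿ·αₙ·xⁿ`. -/
noncomputable def fSeq (x : ℝ) (n : ℕ) : ℝ := (-1) ^ n * alph n * x ^ n

/-- `h₀ = 1` and `hₙ = −(−1)ⁿ·((2n+1)/(2n−1))·αₙ·xⁿ`. -/
noncomputable def hSeq (x : ℝ) (n : ℕ) : ℝ :=
  -((-1) ^ n * ((2 * (n : ℝ) + 1) / (2 * (n : ℝ) - 1)) * alph n * x ^ n)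

/-- `B_{p,q} = ((2(p−q))/((2p−1)(2q−1)))·α_p·α_q·x^{p+q}` for `p, q ≥ 0`. -/
noncomputable def Bcoef (x : ℝ) (p q : ℕ) : ℝ :=
  ((2 * ((p : ℝ) - (q : ℝ))) / ((2 * (p : ℝ) - 1) * (2 * (q : ℝ) - 1))) *
    alph p * alph q * x ^ (p + q)

lemma twocast_ne (k : ℕ) : (2 * (k : ℝ) - 1) ≠ 0 := by
  intro h
  have h2 : ((2 * k : ℕ) : ℝ) = ((1 : ℕ) : ℝ) := by push_cast; linarith
  have := Nat.cast_injective h2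
  omega

lemma Bsymm (x : ℝ) (p q : ℕ) : Bcoef x p q = - Bcoef x q p := by
  unfold Bcoef
  rw [add_comm q p]
  ring

lemma key (x : ℝ) (k l : ℕ) (h : 1 ≤ k + l) :
    (1 / 2 : ℝ) * (fSeq x k * hSeq x l - hSeq x k * fSeq x l) =
      (-1 : ℝ) ^ (k + l - 1) * Bcoef x k l := by
  obtain ⟨m, hm⟩ : ∃ m, k + l = m + 1 := ⟨k + l - 1, by omega⟩
  have h1 : k + l - 1 = m := by omega
  have hk := twocast_ne k
  have hl := twocast_ne l
  have hpow : (-1 : ℝ) ^ m = -((-1 : ℝ) ^ k * (-1) ^ l) := by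
    rw [← pow_add, hm, pow_succ]; ring
  simp only [fSeq, hSeq, Bcoef, h1, pow_add, hpow]
  field_simp
  ring

/-- Coefficient formula `V^{+−}_{kl} = i·(−1)^l·∑_{n=0}^{k} B_{l+n+1,k−n}` in the
expansion of `V^{+−}(z,w)`: for all `k, l ≥ 0` with `(k,l) ≠ (0,0)`,
`(1/2)·(f_k·h_l − h_k·f_l) = (−1)^{k+l−1}·(∑_{n=0}^{k−1} B_{l+n+1,k−1−n}
 − [l ≥ 1]·∑_{n=0}^{k} B_{l+n,k−n})` (empty sums, when `k = 0`, are `0`). -/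
theorem stmt14 (x : ℝ) (k l : ℕ) (hkl : (k, l) ≠ (0, 0)) :
    (1 / 2 : ℝ) * (fSeq x k * hSeq x l - hSeq x k * fSeq x l) =
      (-1 : ℝ) ^ (k + l - 1) *
        ((∑ n ∈ Finset.range k, Bcoef x (l + n + 1) (k - 1 - n)) -
          (if 1 ≤ l then ∑ n ∈ Finset.range (k + 1), Bcoef x (l + n) (k - n) else 0)) := by
  have hkl' : 1 ≤ k + l := by
    rcases Nat.eq_zero_or_pos (k + l) with h | h
    · exact absurd (by ext <;> simp <;> omega) hkl
    · exact h
  rw [key x k l hkl']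
  congr 1
  rcases Nat.eq_zero_or_pos l with hl | hl
  · subst hl
    simp only [Nat.lt_irrefl, if_neg (by omega : ¬ 1 ≤ 0), sub_zero]
    have hk : 1 ≤ k := by omega
    obtain ⟨k', rfl⟩ : ∃ k', k = k' + 1 := ⟨k - 1, by omega⟩
    rw [Finset.sum_range_succ]
    have hT : ∑ n ∈ Finset.range k', Bcoef x (0 + n + 1) (k' + 1 - 1 - n) = 0 := by
      set g : ℕ → ℝ := fun n => Bcoef x (0 + n + 1) (k' + 1 - 1 - n) with hg
      have hrefl := Finset.sum_range_reflect g k'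
      have hneg : ∀ j ∈ Finset.range k', g (k' - 1 - j) = - g j := by
        intro j hj
        rw [Finset.mem_range] at hj
        simp only [hg]
        have e1 : 0 + (k' - 1 - j) + 1 = k' + 1 - 1 - j := by omega
        have e2 : k' + 1 - 1 - (k' - 1 - j) = 0 + j + 1 := by omega
        rw [e1, e2]
        exact Bsymm x _ _
      rw [Finset.sum_congr rfl hneg, Finset.sum_neg_distrib] at hrefl
      linarith [hrefl]
    rw [hT]
    have e3 : k' + 1 - 1 - k' = 0 := by omega
    rw [e3]
    ring_nf
  · have hl1 : 1 ≤ l := hl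
    rw [if_pos hl1]
    rw [Finset.sum_range_succ']
    have estep : ∀ n ∈ Finset.range k,
        Bcoef x (l + (n + 1)) (k - (n + 1)) = Bcoef x (l + n + 1) (k - 1 - n) := by
      intro n hn
      have e1 : l + (n + 1) = l + n + 1 := by omega
      have e2 : k - (n + 1) = k - 1 - n := by omega
      rw [e1, e2]
    rw [Finset.sum_congr rfl estep]
    have : Bcoef x (l + 0) (k - 0) = - Bcoef x k l := by
      simp only [Nat.add_zero, Nat.sub_zero]
      exact Bsymm x l k
    rw [this]
    ring
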